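/- arXiv:1804.05378 — 2 statements merged into one kernel-verified Lean document; each statement's English description precedes it below -/
import Mathlib

section
/- A decision d ∈ {−1,1}^K satisfies RH(d) = min_{d' ∈ {−1,1}^K} RH(d') if and only if for every k ∈ {1,…,K}: c_k(w) > 0 implies d_k = 1, and c_k(w) < 0 implies d_k = −1. (Characterization of the minimizers of the outcome weighted Hamming risk, used in the proof of Theorem 1.) -/
open Finset

noncomputable section

/-- The cube `{-1,1}^K` as a finite set of real vectors. -/
def cube (K : ℕ) : Finset (Fin K → ℝ) :=
  Finset.univ.image (fun b : Fin K → Bool => fun k => if b k then 1 else -1)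

lemma cube_nonempty (K : ℕ) : (cube K).Nonempty :=
  Finset.Nonempty.image Finset.univ_nonempty _

lemma univ_fin_nonempty {K : ℕ} (hK : 1 ≤ K) :
    (Finset.univ : Finset (Fin K)).Nonempty :=
  ⟨⟨0, hK⟩, Finset.mem_univ _⟩

/-- Outcome weighted 0-1 risk at a fixed covariate value:
`R01(d) = Σ_{a ∈ {-1,1}^K} w(a) · 1{a ≠ d}`. -/
def R01 {K : ℕ} (w : (Fin K → ℝ) → ℝ) (d : Fin K → ℝ) : ℝ :=
  ∑ a ∈ cube K, w a * (if a = d then 0 else 1)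

/-- Outcome weighted Hamming risk at a fixed covariate value:
`RH(d) = Σ_{a ∈ {-1,1}^K} w(a) · (1/K) Σ_k 1{a_k ≠ d_k}`. -/
def RH {K : ℕ} (w : (Fin K → ℝ) → ℝ) (d : Fin K → ℝ) : ℝ :=
  ∑ a ∈ cube K, w a * ((1 / (K : ℝ)) * ∑ k : Fin K, if a k = d k then 0 else 1)

/-- Contrast of treatment `k`:
`c_k(w) = Σ_{a : a_k = 1} w(a) - Σ_{a : a_k = -1} w(a)`. -/
def contrast {K : ℕ} (w : (Fin K → ℝ) → ℝ) (k : Fin K) : ℝ :=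
  ∑ a ∈ (cube K).filter (fun a => a k = 1), w a
    - ∑ a ∈ (cube K).filter (fun a => a k = -1), w a

lemma mem_cube_iff {K : ℕ} (d : Fin K → ℝ) :
    d ∈ cube K ↔ ∀ k, d k = 1 ∨ d k = -1 := by
  constructor
  · rintro hd k
    simp only [cube, Finset.mem_image] at hd
    obtain ⟨b, -, rfl⟩ := hd
    by_cases h : b k <;> simp [h]
  · intro h
    simp only [cube, Finset.mem_image]
    refine ⟨fun k => if d k = 1 then true else false, Finset.mem_univ _, ?_⟩
    funext k
    rcases h k with h1 | h1 <;> simp [h1] <;> norm_num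

def Splus {K : ℕ} (w : (Fin K → ℝ) → ℝ) (k : Fin K) : ℝ :=
  ∑ a ∈ (cube K).filter (fun a => a k = 1), w a

def Sminus {K : ℕ} (w : (Fin K → ℝ) → ℝ) (k : Fin K) : ℝ :=
  ∑ a ∈ (cube K).filter (fun a => a k = -1), w a

lemma contrast_eq {K : ℕ} (w : (Fin K → ℝ) → ℝ) (k : Fin K) :
    contrast w k = Splus w k - Sminus w k := rfl

/-- per-coordinate risk -/
def Tk {K : ℕ} (w : (Fin K → ℝ) → ℝ) (k : Fin K) (d : Fin K → ℝ) : ℝ :=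
  if d k = 1 then Sminus w k else Splus w k

lemma sum_ind {K : ℕ} (w : (Fin K → ℝ) → ℝ) (k : Fin K) (d : Fin K → ℝ)
    (hd : d k = 1 ∨ d k = -1) :
    ∑ a ∈ cube K, w a * (if a k = d k then 0 else 1) = Tk w k d := by
  have h1 : ∀ a ∈ cube K, w a * (if a k = d k then 0 else 1)
      = if ¬ a k = d k then w a else 0 := by
    intro a _
    by_cases h : a k = d k <;> simp [h]
  rw [Finset.sum_congr rfl h1, ← Finset.sum_filter]
  rcases hd with h | h
  · have : (cube K).filter (fun a => ¬ a k = d k)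
        = (cube K).filter (fun a => a k = -1) := by
      apply Finset.filter_congr
      intro a ha
      rcases (mem_cube_iff a).mp ha k with h2 | h2 <;> simp [h, h2] <;> norm_num
    rw [this]; simp [Tk, h, Sminus]
  · have : (cube K).filter (fun a => ¬ a k = d k)
        = (cube K).filter (fun a => a k = 1) := by
      apply Finset.filter_congr
      intro a ha
      rcases (mem_cube_iff a).mp ha k with h2 | h2 <;> simp [h, h2] <;> norm_num
    have hne : d k ≠ 1 := by rw [h]; norm_num
    rw [this]; simp [Tk, hne, Splus]

lemma RH_eq {K : ℕ} (w : (Fin K → ℝ) → ℝ) (d : Fin K → ℝ) (hd : d ∈ cube K) :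
    RH w d = (1 / (K : ℝ)) * ∑ k : Fin K, Tk w k d := by
  have : RH w d = ∑ a ∈ cube K, ∑ k : Fin K,
      (1 / (K : ℝ)) * (w a * (if a k = d k then 0 else 1)) := by
    unfold RH
    refine Finset.sum_congr rfl fun a _ => ?_
    rw [Finset.mul_sum, Finset.mul_sum]
    exact Finset.sum_congr rfl fun k _ => by ring
  rw [this, Finset.sum_comm, Finset.mul_sum]
  refine Finset.sum_congr rfl fun k _ => ?_
  rw [← Finset.mul_sum, sum_ind w k d ((mem_cube_iff d).mp hd k)]

lemma Tk_le {K : ℕ} (w : (Fin K → ℝ) → ℝ) (k : Fin K) (d d' : Fin K → ℝ)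
    (hcond : (0 < contrast w k → d k = 1) ∧ (contrast w k < 0 → d k = -1)) :
    Tk w k d ≤ Tk w k d' := by
  rcases lt_trichotomy (contrast w k) 0 with h | h | h
  · have hd1 : d k = -1 := hcond.2 h
    have hne : d k ≠ 1 := by rw [hd1]; norm_num
    rw [contrast_eq] at h
    unfold Tk
    rw [if_neg hne]
    split <;> linarith
  · rw [contrast_eq] at h
    unfold Tk
    split <;> split <;> linarith
  · have hd1 : d k = 1 := hcond.1 h
    rw [contrast_eq] at h
    unfold Tk
    rw [if_pos hd1]
    split <;> linarith

/-- Characterization of the minimizers of the outcome weighted Hamming risk. -/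
theorem hamming_minimizer_characterization
    (K : ℕ) (hK : 1 ≤ K) (w : (Fin K → ℝ) → ℝ)
    (hw : ∀ a ∈ cube K, 0 ≤ w a)
    (d : Fin K → ℝ) (hd : d ∈ cube K) :
    (∀ d' ∈ cube K, RH w d ≤ RH w d') ↔
      ∀ k : Fin K, (0 < contrast w k → d k = 1) ∧ (contrast w k < 0 → d k = -1) := by
  have hKpos : (0 : ℝ) < 1 / (K : ℝ) := by
    have : (0 : ℝ) < (K : ℝ) := by exact_mod_cast hK
    positivity
  constructor
  · intro hmin k
    set d' : Fin K → ℝ := Function.update d k (-(d k)) with hd'def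
    have hd'cube : d' ∈ cube K := by
      rw [mem_cube_iff]
      intro j
      by_cases hj : j = k
      · subst hj
        rcases (mem_cube_iff d).mp hd j with h | h <;>
          simp [hd'def, Function.update_self, h]
      · simp only [hd'def, Function.update_of_ne hj]
        exact (mem_cube_iff d).mp hd j
    have hsum : ∑ j : Fin K, Tk w j d ≤ ∑ j : Fin K, Tk w j d' := by
      have := hmin d' hd'cube
      rw [RH_eq w d hd, RH_eq w d' hd'cube] at this
      exact le_of_mul_le_mul_left this hKpos
    have hTk : Tk w k d ≤ Tk w k d' := by
      have heq : ∀ j ∈ Finset.univ.erase k, Tk w j d' = Tk w j d := by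
        intro j hj
        have hj' : j ≠ k := Finset.ne_of_mem_erase hj
        unfold Tk
        rw [hd'def, Function.update_of_ne hj']
      rw [← Finset.add_sum_erase _ _ (Finset.mem_univ k),
          ← Finset.add_sum_erase _ _ (Finset.mem_univ k),
          Finset.sum_congr rfl heq] at hsum
      linarith
    have hd'k : d' k = -(d k) := Function.update_self k _ d
    constructor
    · intro hc
      rcases (mem_cube_iff d).mp hd k with h | h
      · exact h
      · exfalso
        have hne : d k ≠ 1 := by rw [h]; norm_num
        have hd'1 : d' k = 1 := by rw [hd'k, h]; norm_num
        unfold Tk at hTk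
        rw [if_neg hne, if_pos hd'1] at hTk
        rw [contrast_eq] at hc
        linarith
    · intro hc
      rcases (mem_cube_iff d).mp hd k with h | h
      · exfalso
        have hd'ne : d' k ≠ 1 := by rw [hd'k, h]; norm_num
        unfold Tk at hTk
        rw [if_pos h, if_neg hd'ne] at hTk
        rw [contrast_eq] at hc
        linarith
      · exact h
  · intro hcond d' hd'
    rw [RH_eq w d hd, RH_eq w d' hd']
    apply mul_le_mul_of_nonneg_left _ (le_of_lt hKpos)
    exact Finset.sum_le_sum fun k _ => Tk_le w k d d' (hcond k)
end
end

section
/- Suppose w(a) = Σ_{k : a_k = 1} T_k + r(a) + m for all a ∈ {−1,1}^K, where T : {1,…,K} → ℝ, r : {−1,1}^K → ℝ and m ∈ ℝ. Then for every k ∈ {1,…,K}: c_k(w) = 2^{K−1}·T_k + (Σ_{a : a_k = 1} r(a) − Σ_{a : a_k = −1} r(a)), and consequently |c_k(w) − 2^{K−1}·T_k| ≤ 2^K·max_a |r(a)|. Moreover, if 2·max_a |r(a)| < min_k |T_k|, then c_k(w) and T_k have the same strict sign: c_k(w) > 0 if T_k > 0 and c_k(w) < 0 if T_k < 0. (Contrast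 computation from the proof of Theorem 2.) -/
open Finset

noncomputable section

lemma mem_cube {K : ℕ} {a : Fin K → ℝ} :
    a ∈ cube K ↔ ∀ j, a j = 1 ∨ a j = -1 := by
  classical
  constructor
  · rintro h j
    simp only [cube, Finset.mem_image] at h
    obtain ⟨b, -, rfl⟩ := h
    by_cases hb : b j <;> simp [hb]
  · intro h
    simp only [cube, Finset.mem_image]
    refine ⟨fun j => if a j = 1 then true else false, Finset.mem_univ _, ?_⟩
    funext j
    rcases h j with h1 | h1 <;> norm_num [h1]

/-- flip coordinate k -/
def flipk {K : ℕ} (k : Fin K) (a : Fin K → ℝ) : Fin K → ℝ :=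
  Function.update a k (-(a k))

lemma flipk_apply_self {K : ℕ} (k : Fin K) (a : Fin K → ℝ) : flipk k a k = -(a k) := by
  simp [flipk]

lemma flipk_apply_ne {K : ℕ} (k : Fin K) (a : Fin K → ℝ) {j : Fin K} (hj : j ≠ k) :
    flipk k a j = a j := by
  simp [flipk, Function.update_of_ne hj]

lemma flipk_flipk {K : ℕ} (k : Fin K) (a : Fin K → ℝ) : flipk k (flipk k a) = a := by
  funext j
  by_cases hj : j = k
  · subst hj; simp [flipk_apply_self]
  · rw [flipk_apply_ne k _ hj, flipk_apply_ne k _ hj]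

lemma flipk_mem_cube {K : ℕ} (k : Fin K) {a : Fin K → ℝ} (ha : a ∈ cube K) :
    flipk k a ∈ cube K := by
  rw [mem_cube] at ha ⊢
  intro j
  by_cases hj : j = k
  · subst hj; rw [flipk_apply_self]; rcases ha j with h | h <;> simp [h]
  · rw [flipk_apply_ne k _ hj]; exact ha j

lemma sum_neg_filter {K : ℕ} (k : Fin K) (f : (Fin K → ℝ) → ℝ) :
    ∑ a ∈ (cube K).filter (fun a => a k = -1), f a
      = ∑ a ∈ (cube K).filter (fun a => a k = 1), f (flipk k a) := by
  classical
  refine Finset.sum_nbij' (i := fun a => flipk k a) (j := fun a => flipk k a) ?_ ?_ ?_ ?_ ?_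
  · intro a ha
    simp only [Finset.mem_filter] at ha ⊢
    refine ⟨flipk_mem_cube k ha.1, ?_⟩
    rw [flipk_apply_self, ha.2]; norm_num
  · intro a ha
    simp only [Finset.mem_filter] at ha ⊢
    refine ⟨flipk_mem_cube k ha.1, ?_⟩
    rw [flipk_apply_self, ha.2]
  · intro a _; exact flipk_flipk k a
  · intro a _; exact flipk_flipk k a
  · intro a _; rw [flipk_flipk]

lemma card_cube (K : ℕ) : (cube K).card = 2 ^ K := by
  classical
  rw [cube, Finset.card_image_of_injective]
  · simp [Finset.card_univ]
  · intro b1 b2 h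
    funext j
    have := congrFun h j
    cases hb1 : b1 j <;> cases hb2 : b2 j
    · rfl
    · simp only [hb1, hb2] at this; norm_num at this
    · simp only [hb1, hb2] at this; norm_num at this
    · rfl

lemma card_pos_filter {K : ℕ} (hK : 1 ≤ K) (k : Fin K) :
    ((cube K).filter (fun a => a k = 1)).card = 2 ^ (K - 1) := by
  classical
  have hcards : ((cube K).filter (fun a => a k = 1)).card
      = ((cube K).filter (fun a => a k = -1)).card := by
    have := sum_neg_filter k (fun _ => (1 : ℝ))
    simp only [Finset.sum_const, nsmul_eq_mul, mul_one] at this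
    exact_mod_cast this.symm
  have hneg : (cube K).filter (fun a => ¬ a k = 1) = (cube K).filter (fun a => a k = -1) := by
    apply Finset.filter_congr
    intro a ha
    rcases (mem_cube.1 ha) k with h | h
    · constructor
      · intro hc; exact absurd h hc
      · intro hc; rw [h] at hc; norm_num at hc
    · constructor
      · intro _; exact h
      · intro _; rw [h]; norm_num
  have hsplit : ((cube K).filter (fun a => a k = 1)).card
      + ((cube K).filter (fun a => a k = -1)).card = 2 ^ K := by
    rw [← hneg, Finset.card_filter_add_card_filter_not, card_cube]
  have h2 : (2 : ℕ) ^ ((K - 1) + 1) = 2 ^ (K - 1) * 2 := pow_succ 2 (K - 1)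
  rw [Nat.sub_add_cancel hK] at h2
  have hmul : ((cube K).filter (fun a => a k = 1)).card * 2 = 2 ^ (K - 1) * 2 := by
    calc ((cube K).filter (fun a => a k = 1)).card * 2
        = ((cube K).filter (fun a => a k = 1)).card
          + ((cube K).filter (fun a => a k = 1)).card := mul_two _
      _ = ((cube K).filter (fun a => a k = 1)).card
          + ((cube K).filter (fun a => a k = -1)).card := by rw [hcards]
      _ = 2 ^ K := hsplit
      _ = 2 ^ (K - 1) * 2 := h2
  exact Nat.eq_of_mul_eq_mul_right (by norm_num) hmul

lemma filter_flipk_eq {K : ℕ} (k : Fin K) {a : Fin K → ℝ} (hak : a k = 1) :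
    Finset.univ.filter (fun j => flipk k a j = 1)
      = (Finset.univ.filter (fun j => a j = 1)).erase k := by
  classical
  ext j
  simp only [Finset.mem_filter, Finset.mem_erase, Finset.mem_univ, true_and]
  by_cases hj : j = k
  · subst hj
    rw [flipk_apply_self, hak]
    norm_num
  · rw [flipk_apply_ne k _ hj]
    tauto

lemma card_neg_filter {K : ℕ} (hK : 1 ≤ K) (k : Fin K) :
    ((cube K).filter (fun a => a k = -1)).card = 2 ^ (K - 1) := by
  have := sum_neg_filter k (fun _ => (1 : ℝ))
  simp only [Finset.sum_const, nsmul_eq_mul, mul_one] at this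
  have hc : ((cube K).filter (fun a => a k = -1)).card
      = ((cube K).filter (fun a => a k = 1)).card := by exact_mod_cast this
  rw [hc, card_pos_filter hK k]

/-- Contrast computation under additive treatment effects with interactions
(from the proof of Theorem 2). -/
theorem contrast_additive
    (K : ℕ) (hK : 1 ≤ K) (w : (Fin K → ℝ) → ℝ)
    (T : Fin K → ℝ) (r : (Fin K → ℝ) → ℝ) (m : ℝ)
    (hwform : ∀ a ∈ cube K,
      w a = (∑ k ∈ Finset.univ.filter (fun k => a k = 1), T k) + r a + m) :
    ∀ k : Fin K,
      contrast w k = (2 : ℝ) ^ (K - 1) * T k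
          + ((∑ a ∈ (cube K).filter (fun a => a k = 1), r a)
            - ∑ a ∈ (cube K).filter (fun a => a k = -1), r a)
      ∧ |contrast w k - (2 : ℝ) ^ (K - 1) * T k|
          ≤ (2 : ℝ) ^ K * (cube K).sup' (cube_nonempty K) (fun a => |r a|)
      ∧ (2 * (cube K).sup' (cube_nonempty K) (fun a => |r a|)
            < Finset.univ.inf' (univ_fin_nonempty hK) (fun k' => |T k'|) →
          (0 < T k → 0 < contrast w k) ∧ (T k < 0 → contrast w k < 0)) := by
  classical
  intro k
  set M := (cube K).sup' (cube_nonempty K) (fun a => |r a|) with hMdef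
  obtain ⟨a₀, ha₀⟩ := cube_nonempty K
  have hMnn : 0 ≤ M :=
    le_trans (abs_nonneg (r a₀)) (Finset.le_sup' (fun a => |r a|) ha₀)
  have hpowK : (2 : ℝ) ^ K = 2 ^ (K - 1) * 2 := by
    have h2 : (2 : ℝ) ^ ((K - 1) + 1) = 2 ^ (K - 1) * 2 := pow_succ 2 (K - 1)
    rw [Nat.sub_add_cancel hK] at h2
    exact h2
  -- Part 1
  have h1 : contrast w k = (2 : ℝ) ^ (K - 1) * T k
      + ((∑ a ∈ (cube K).filter (fun a => a k = 1), r a)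
        - ∑ a ∈ (cube K).filter (fun a => a k = -1), r a) := by
    unfold contrast
    rw [sum_neg_filter k w, ← Finset.sum_sub_distrib]
    have hterm : ∀ a ∈ (cube K).filter (fun a => a k = 1),
        w a - w (flipk k a) = T k + (r a - r (flipk k a)) := by
      intro a ha
      obtain ⟨hac, hak⟩ := Finset.mem_filter.mp ha
      rw [hwform a hac, hwform _ (flipk_mem_cube k hac)]
      have hS : ∑ j ∈ Finset.univ.filter (fun j => a j = 1), T j
          = T k + ∑ j ∈ Finset.univ.filter (fun j => flipk k a j = 1), T j := by
        rw [filter_flipk_eq k hak]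
        exact (Finset.add_sum_erase _ T (by simp [hak])).symm
      rw [hS]
      ring
    rw [Finset.sum_congr rfl hterm, Finset.sum_add_distrib, Finset.sum_const,
        Finset.sum_sub_distrib, card_pos_filter hK k, ← sum_neg_filter k r]
    ring
  -- Part 2
  have hsumP : |∑ a ∈ (cube K).filter (fun a => a k = 1), r a|
      ≤ (2 : ℝ) ^ (K - 1) * M := by
    calc |∑ a ∈ (cube K).filter (fun a => a k = 1), r a|
        ≤ ∑ a ∈ (cube K).filter (fun a => a k = 1), |r a| :=
          Finset.abs_sum_le_sum_abs _ _
      _ ≤ ∑ _a ∈ (cube K).filter (fun a => a k = 1), M := by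
          refine Finset.sum_le_sum fun a ha => ?_
          exact Finset.le_sup' (fun a => |r a|) (Finset.mem_filter.mp ha).1
      _ = (2 : ℝ) ^ (K - 1) * M := by
          rw [Finset.sum_const, card_pos_filter hK k, nsmul_eq_mul]
          push_cast
          ring
  have hsumN : |∑ a ∈ (cube K).filter (fun a => a k = -1), r a|
      ≤ (2 : ℝ) ^ (K - 1) * M := by
    calc |∑ a ∈ (cube K).filter (fun a => a k = -1), r a|
        ≤ ∑ a ∈ (cube K).filter (fun a => a k = -1), |r a| :=
          Finset.abs_sum_le_sum_abs _ _
      _ ≤ ∑ _a ∈ (cube K).filter (fun a => a k = -1), M := by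
          refine Finset.sum_le_sum fun a ha => ?_
          exact Finset.le_sup' (fun a => |r a|) (Finset.mem_filter.mp ha).1
      _ = (2 : ℝ) ^ (K - 1) * M := by
          rw [Finset.sum_const, card_neg_filter hK k, nsmul_eq_mul]
          push_cast
          ring
  have h2 : |contrast w k - (2 : ℝ) ^ (K - 1) * T k| ≤ (2 : ℝ) ^ K * M := by
    rw [h1, add_sub_cancel_left, hpowK]
    calc |(∑ a ∈ (cube K).filter (fun a => a k = 1), r a)
          - ∑ a ∈ (cube K).filter (fun a => a k = -1), r a|
        ≤ |∑ a ∈ (cube K).filter (fun a => a k = 1), r a|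
          + |∑ a ∈ (cube K).filter (fun a => a k = -1), r a| := abs_sub _ _
      _ ≤ (2 : ℝ) ^ (K - 1) * M + (2 : ℝ) ^ (K - 1) * M := add_le_add hsumP hsumN
      _ = 2 ^ (K - 1) * 2 * M := by ring
  refine ⟨h1, h2, ?_⟩
  -- Part 3
  intro hlt
  have hinf : Finset.univ.inf' (univ_fin_nonempty hK) (fun k' => |T k'|) ≤ |T k| :=
    Finset.inf'_le _ (Finset.mem_univ k)
  have hMk : 2 * M < |T k| := lt_of_lt_of_le hlt hinf
  have hpos : (0 : ℝ) < 2 ^ (K - 1) := by positivity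
  have hKM : (2 : ℝ) ^ K * M < 2 ^ (K - 1) * |T k| := by
    rw [hpowK]
    calc (2 : ℝ) ^ (K - 1) * 2 * M = 2 ^ (K - 1) * (2 * M) := by ring
      _ < 2 ^ (K - 1) * |T k| := by exact mul_lt_mul_of_pos_left hMk hpos
  have habs := abs_le.mp h2
  constructor
  · intro hTk
    rw [abs_of_pos hTk] at hKM
    have := habs.1
    linarith
  · intro hTk
    rw [abs_of_neg hTk] at hKM
    have := habs.2
    linarith
end
end
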